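/- Let n = 2m+1 be odd, v₁, …, v_n distinct points of the unit circle-like sphere S of a two-dimensional normed space arranged counterclockwise with v_{n+1} = v₁, such that the n sectors B_{v_i}^{v_{i+1}} partition the unit ball into n pieces of equal area (counting multiplicity k of winding). Then the 2n points {±v₁, …, ±v_n} are all distinct and split the unit ball B into 2n disjoint sectors of equal area. -/

import Mathlib

open Real Set

/-- `N` is a norm on the two-dimensional real vector space `ℝ × ℝ`. -/
def IsNorm (N : ℝ × ℝ → ℝ) : Prop :=
  (∀ x, N x = 0 ↔ x = 0) ∧ (∀ (a : ℝ) (x : ℝ × ℝ), N (a • x) = |a| * N x) ∧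
    ∀ x y, N (x + y) ≤ N x + N y

/-- The 2D cross product `u ∧ v`; `u ≺ v` means `0 < wedge u v`. -/
def wedge (u v : ℝ × ℝ) : ℝ := u.1 * v.2 - u.2 * v.1

/-- `inf_{t ∈ [0,1]} N ((1−t)u + tv)`, the minimal `N`-norm on the segment `[u,v]`. -/
noncomputable def segInf (N : ℝ × ℝ → ℝ) (u v : ℝ × ℝ) : ℝ :=
  sInf ((fun t : ℝ => N ((1 - t) • u + t • v)) '' Icc (0:ℝ) 1)

/-- Property (P-ρS): every chord of the unit sphere of `N` that supports `ρS`
touches `ρS` at its midpoint. -/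
def PropP (N : ℝ × ℝ → ℝ) (ρ : ℝ) : Prop :=
  ∀ u v : ℝ × ℝ, N u = 1 → N v = 1 → segInf N u v = ρ →
    N ((1/2 : ℝ) • u + (1/2 : ℝ) • v) = ρ

/-- The sector `B_u^v` of the unit ball bounded by `[0,u]`, `[0,v]` and the
counterclockwise arc of the sphere from `u` to `v` (arc less than a half turn). -/
def Sector (N : ℝ × ℝ → ℝ) (u v : ℝ × ℝ) : Set (ℝ × ℝ) :=
  {x | N x ≤ 1 ∧ 0 ≤ wedge u x ∧ 0 ≤ wedge x v}

/-!
Measure a point `x` of the unit sphere by the area swept counterclockwise from a base point `u`.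
Modulo `Area(B)` this area-angle is additive along sectors and shifts by `Area(B)/2` under
`x ↦ -x`. With `g = Area(B)/(2n)`, the vertex `vᵢ` sits at area-angle `2kig` and `-vᵢ` at
`(2ki + n)g`; as `n` is odd and `k` is prime to `n`, these points reach every multiple of `g`
modulo `2ng = Area(B)`. Hence a sector between two of the points has area a positive multiple of
`g`, and if that multiple exceeded `1`, the point one step `g` further than the first one would lie
strictly inside the sector.
-/

open MeasureTheory

lemma wedge_anticomm (a b : ℝ × ℝ) : wedge a b = -wedge b a := by
  simp only [wedge]; ring

@[simp] lemma wedge_neg_left (a b : ℝ × ℝ) : wedge (-a) b = -wedge a b := by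
  simp only [wedge, Prod.fst_neg, Prod.snd_neg]; ring

@[simp] lemma wedge_neg_right (a b : ℝ × ℝ) : wedge a (-b) = -wedge a b := by
  simp only [wedge, Prod.fst_neg, Prod.snd_neg]; ring

lemma wedge_neg_left_eq (a b : ℝ × ℝ) : wedge (-a) b = wedge b a := by
  rw [wedge_neg_left, wedge_anticomm, neg_neg]

lemma wedge_neg_right_eq (a b : ℝ × ℝ) : wedge a (-b) = wedge b a := by
  rw [wedge_neg_right, wedge_anticomm, neg_neg]

@[simp] lemma wedge_self (a : ℝ × ℝ) : wedge a a = 0 := by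
  simp only [wedge]; ring

@[simp] lemma wedge_smul_right (a x : ℝ × ℝ) (c : ℝ) : wedge a (c • x) = c * wedge a x := by
  simp only [wedge, Prod.smul_fst, Prod.smul_snd, smul_eq_mul]; ring

lemma continuous_wedge_right (a : ℝ × ℝ) : Continuous (wedge a) := by
  unfold wedge; fun_prop

lemma continuous_wedge_left (b : ℝ × ℝ) : Continuous (fun x => wedge x b) := by
  unfold wedge; fun_prop

lemma fst_sq_add_snd_sq_pos {a : ℝ × ℝ} (ha : a ≠ 0) : 0 < a.1 ^ 2 + a.2 ^ 2 := by
  have : a.1 ≠ 0 ∨ a.2 ≠ 0 := by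
    contrapose! ha
    exact Prod.ext ha.1 ha.2
  rcases this with h | h <;> positivity

lemma exists_eq_smul_of_wedge_eq_zero {a x : ℝ × ℝ} (ha : a ≠ 0) (h : wedge a x = 0) :
    ∃ c : ℝ, x = c • a := by
  have hsq := (fst_sq_add_snd_sq_pos ha).ne'
  simp only [wedge] at h
  refine ⟨(a.1 * x.1 + a.2 * x.2) / (a.1 ^ 2 + a.2 ^ 2), Prod.ext ?_ ?_⟩ <;>
    simp only [Prod.smul_fst, Prod.smul_snd, smul_eq_mul] <;> field_simp
  · linear_combination (-a.2) * h
  · linear_combination a.1 * h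

namespace IsNorm

variable {N : ℝ × ℝ → ℝ} (hN : IsNorm N)
include hN

lemma map_zero : N 0 = 0 := (hN.1 0).2 rfl

lemma map_neg (x : ℝ × ℝ) : N (-x) = N x := by
  simpa using hN.2.1 (-1) x

lemma nonneg (x : ℝ × ℝ) : 0 ≤ N x := by
  have := hN.2.2 x (-x)
  rw [add_neg_cancel, hN.map_zero, hN.map_neg] at this
  linarith

lemma ne_zero_of_eq_one {x : ℝ × ℝ} (hx : N x = 1) : x ≠ 0 := by
  rintro rfl
  simp [hN.map_zero] at hx

lemma convexOn : ConvexOn ℝ univ N :=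
  ⟨convex_univ, fun x _ y _ a b ha hb _ => by
    simpa only [hN.2.1, abs_of_nonneg ha, abs_of_nonneg hb, smul_eq_mul]
      using hN.2.2 (a • x) (b • y)⟩

lemma continuous : Continuous N := hN.convexOn.locallyLipschitz.continuous

lemma exists_pos_mul_norm_le : ∃ c > 0, ∀ x, c * ‖x‖ ≤ N x := by
  obtain ⟨x₀, hx₀, hmin⟩ := (isCompact_sphere (0 : ℝ × ℝ) 1).exists_isMinOn
    (NormedSpace.sphere_nonempty.2 zero_le_one) hN.continuous.continuousOn
  have hx₀ne : x₀ ≠ 0 := ne_zero_of_mem_unit_sphere ⟨x₀, hx₀⟩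
  refine ⟨N x₀, (hN.nonneg x₀).lt_of_ne fun h => hx₀ne ((hN.1 x₀).1 h.symm), fun x => ?_⟩
  rcases eq_or_ne x 0 with rfl | hx
  · simp [hN.map_zero]
  have hnorm : ‖x‖ ≠ 0 := norm_ne_zero_iff.2 hx
  have hsphere : ‖x‖⁻¹ • x ∈ Metric.sphere (0 : ℝ × ℝ) 1 := by
    simp [norm_smul, hnorm]
  calc N x₀ * ‖x‖ ≤ N (‖x‖⁻¹ • x) * ‖x‖ := by gcongr; exact hmin hsphere
    _ = N x := by rw [hN.2.1, abs_inv, abs_norm]; field_simp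

lemma isBounded_unitBall : Bornology.IsBounded {x : ℝ × ℝ | N x ≤ 1} := by
  obtain ⟨c, hc, hle⟩ := hN.exists_pos_mul_norm_le
  refine (Metric.isBounded_closedBall (x := 0) (r := c⁻¹)).subset fun x hx => ?_
  rw [mem_closedBall_zero_iff, ← one_div, le_div_iff₀ hc, mul_comm]
  exact (hle x).trans hx

lemma volume_unitBall_ne_top : volume {x : ℝ × ℝ | N x ≤ 1} ≠ ⊤ :=
  hN.isBounded_unitBall.measure_lt_top.ne

lemma eq_or_eq_neg_of_wedge_eq_zero {u x : ℝ × ℝ} (hu : N u = 1) (hx : N x = 1)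
    (h : wedge u x = 0) : x = u ∨ x = -u := by
  obtain ⟨c, rfl⟩ := exists_eq_smul_of_wedge_eq_zero (hN.ne_zero_of_eq_one hu) h
  rw [hN.2.1, hu, mul_one] at hx
  rcases abs_eq zero_le_one |>.1 hx with rfl | rfl
  · exact Or.inl (one_smul ℝ u)
  · exact Or.inr (neg_one_smul ℝ u)

lemma eq_or_eq_neg_or_wedge_pos_or_wedge_pos {u x : ℝ × ℝ} (hu : N u = 1) (hx : N x = 1) :
    x = u ∨ x = -u ∨ 0 < wedge u x ∨ 0 < wedge x u := by
  rcases lt_trichotomy (wedge u x) 0 with h | h | h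
  · exact Or.inr <| Or.inr <| Or.inr <| by linarith [wedge_anticomm x u]
  · exact (hN.eq_or_eq_neg_of_wedge_eq_zero hu hx h).imp_right Or.inl
  · exact Or.inr <| Or.inr <| Or.inl h

end IsNorm

lemma volume_setOf_wedge_eq_zero {b : ℝ × ℝ} (hb : b ≠ 0) :
    volume {x : ℝ × ℝ | wedge b x = 0} = 0 := by
  have hsub : {x : ℝ × ℝ | wedge b x = 0} ⊆ (ℝ ∙ b : Submodule ℝ (ℝ × ℝ)) := fun x hx => by
    obtain ⟨c, rfl⟩ := exists_eq_smul_of_wedge_eq_zero hb hx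
    exact Submodule.smul_mem _ c (Submodule.mem_span_singleton_self b)
  refine measure_mono_null hsub (Measure.addHaar_submodule volume _ fun htop => ?_)
  have hmem : ((-b.2, b.1) : ℝ × ℝ) ∈ ℝ ∙ b := htop ▸ Submodule.mem_top
  obtain ⟨c, hc⟩ := Submodule.mem_span_singleton.1 hmem
  have := congrArg (wedge b) hc
  rw [wedge_smul_right, wedge_self, mul_zero] at this
  simp only [wedge] at this
  nlinarith [fst_sq_add_snd_sq_pos hb]

section Sector

variable {N : ℝ × ℝ → ℝ}

lemma isClosed_sector (hN : IsNorm N) (a b : ℝ × ℝ) : IsClosed (Sector N a b) :=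
  (isClosed_le hN.continuous continuous_const).inter
    ((isClosed_le continuous_const (continuous_wedge_right a)).inter
      (isClosed_le continuous_const (continuous_wedge_left b)))

lemma sector_neg_neg (hN : IsNorm N) (a b : ℝ × ℝ) :
    Sector N (-a) (-b) = Neg.neg ⁻¹' Sector N a b := by
  ext x
  simp [Sector, hN.map_neg]

lemma volume_sector_neg_neg (hN : IsNorm N) (a b : ℝ × ℝ) :
    volume (Sector N (-a) (-b)) = volume (Sector N a b) := by
  rw [sector_neg_neg hN, Measure.measure_preimage_neg]

lemma sector_union_sector {a b c : ℝ × ℝ} (hab : 0 < wedge a b) (hbc : 0 < wedge b c)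
    (hac : 0 ≤ wedge a c) : Sector N a b ∪ Sector N b c = Sector N a c := by
  ext x
  have hxb := wedge_anticomm x b
  have key : wedge x c * wedge a b = wedge a c * wedge x b + wedge a x * wedge b c := by
    simp only [wedge]; ring
  simp only [Sector, mem_union, mem_ofPred_eq]
  constructor
  · rintro (⟨hx, hax, hxb'⟩ | ⟨hx, hbx, hxc⟩)
    · exact ⟨hx, hax, by nlinarith [mul_nonneg hac hxb', mul_nonneg hax hbc.le]⟩
    · exact ⟨hx, by nlinarith [mul_nonneg hac hbx, mul_nonneg hxc hab.le], hxc⟩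
  · rintro ⟨hx, hax, hxc⟩
    rcases le_total 0 (wedge x b) with h | h
    · exact Or.inl ⟨hx, hax, h⟩
    · exact Or.inr ⟨hx, by linarith, hxc⟩

lemma volume_sector_add (hN : IsNorm N) {a b c : ℝ × ℝ} (hab : 0 < wedge a b)
    (hbc : 0 < wedge b c) (hac : 0 ≤ wedge a c) :
    volume (Sector N a c) = volume (Sector N a b) + volume (Sector N b c) := by
  have hb : b ≠ 0 := by rintro rfl; simp [wedge] at hbc
  rw [← sector_union_sector hab hbc hac]
  refine measure_union₀ (isClosed_sector hN b c).measurableSet.nullMeasurableSet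
    (measure_mono_null (fun x hx => ?_) (volume_setOf_wedge_eq_zero hb))
  have := wedge_anticomm x b
  exact le_antisymm (by linarith [hx.1.2.2]) hx.2.2.1

lemma two_mul_volume_sector_neg_self (hN : IsNorm N) {a : ℝ × ℝ} (ha : a ≠ 0) :
    2 * volume (Sector N a (-a)) = volume {x : ℝ × ℝ | N x ≤ 1} := by
  have hunion : Sector N a (-a) ∪ Sector N (-a) (-(-a)) = {x : ℝ × ℝ | N x ≤ 1} := by
    ext x
    have := wedge_anticomm x a
    simp only [Sector, neg_neg, wedge_neg_left, wedge_neg_right, mem_union, mem_ofPred_eq]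
    constructor
    · rintro (h | h) <;> exact h.1
    · intro hx
      rcases le_total 0 (wedge a x) with h | h
      · exact Or.inl ⟨hx, h, by linarith⟩
      · exact Or.inr ⟨hx, by linarith, by linarith⟩
  rw [← hunion, measure_union₀ (isClosed_sector hN _ _).measurableSet.nullMeasurableSet
    (measure_mono_null (fun x hx => ?_) (volume_setOf_wedge_eq_zero ha)),
    volume_sector_neg_neg hN, two_mul]
  simp only [Sector, neg_neg, wedge_neg_left, mem_inter_iff, mem_ofPred_eq] at hx
  exact le_antisymm (by linarith [hx.2.2.1]) hx.1.2.1

lemma volume_sector_pos (hN : IsNorm N) {a b : ℝ × ℝ} (hab : 0 < wedge a b) :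
    0 < volume (Sector N a b) := by
  have hN₀ := hN.nonneg (a + b)
  set t := (N (a + b) + 1)⁻¹
  have ht : 0 < t := by positivity
  have hopen : IsOpen {x | N x < 1 ∧ 0 < wedge a x ∧ 0 < wedge x b} :=
    (isOpen_lt hN.continuous continuous_const).inter
      ((isOpen_lt continuous_const (continuous_wedge_right a)).inter
        (isOpen_lt continuous_const (continuous_wedge_left b)))
  have hmem : t • (a + b) ∈ {x | N x < 1 ∧ 0 < wedge a x ∧ 0 < wedge x b} := by
    refine ⟨?_, ?_, ?_⟩
    · rw [hN.2.1, abs_of_pos ht, inv_mul_lt_one₀ (by positivity)]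
      linarith
    · simp only [wedge, Prod.smul_fst, Prod.smul_snd, Prod.fst_add, Prod.snd_add,
        smul_eq_mul] at hab ⊢
      nlinarith
    · simp only [wedge, Prod.smul_fst, Prod.smul_snd, Prod.fst_add, Prod.snd_add,
        smul_eq_mul] at hab ⊢
      nlinarith
  exact (hopen.measure_pos volume ⟨_, hmem⟩).trans_le
    (measure_mono fun x hx => ⟨hx.1.le, hx.2.1.le, hx.2.2.le⟩)

end Sector

noncomputable def sectorArea (N : ℝ × ℝ → ℝ) (a b : ℝ × ℝ) : ℝ :=
  (volume (Sector N a b)).toReal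

noncomputable def ballArea (N : ℝ × ℝ → ℝ) : ℝ :=
  (volume {x : ℝ × ℝ | N x ≤ 1}).toReal

section Area

variable {N : ℝ × ℝ → ℝ} (hN : IsNorm N)
include hN

lemma volume_sector_ne_top (a b : ℝ × ℝ) : volume (Sector N a b) ≠ ⊤ :=
  ne_top_of_le_ne_top hN.volume_unitBall_ne_top (measure_mono fun _ hx => hx.1)

lemma sectorArea_neg_neg (a b : ℝ × ℝ) : sectorArea N (-a) (-b) = sectorArea N a b := by
  rw [sectorArea, volume_sector_neg_neg hN, sectorArea]

lemma sectorArea_add {a b c : ℝ × ℝ} (hab : 0 < wedge a b) (hbc : 0 < wedge b c)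
    (hac : 0 ≤ wedge a c) : sectorArea N a c = sectorArea N a b + sectorArea N b c := by
  rw [sectorArea, volume_sector_add hN hab hbc hac,
    ENNReal.toReal_add (volume_sector_ne_top hN a b) (volume_sector_ne_top hN b c), sectorArea,
    sectorArea]

lemma sectorArea_pos {a b : ℝ × ℝ} (hab : 0 < wedge a b) : 0 < sectorArea N a b :=
  ENNReal.toReal_pos (volume_sector_pos hN hab).ne' (volume_sector_ne_top hN a b)

lemma sectorArea_add_sectorArea_neg {a b : ℝ × ℝ} (hab : 0 < wedge a b) :
    sectorArea N a b + sectorArea N b (-a) = ballArea N / 2 := by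
  have ha : a ≠ 0 := by rintro rfl; simp [wedge] at hab
  have hhalf := congrArg ENNReal.toReal (two_mul_volume_sector_neg_self hN ha)
  rw [ENNReal.toReal_mul, ENNReal.toReal_ofNat] at hhalf
  rw [← sectorArea_add hN hab (by rwa [wedge_neg_right_eq]) (by simp),
    sectorArea, ballArea, ← hhalf]
  ring

lemma sectorArea_lt_half {a b : ℝ × ℝ} (hab : 0 < wedge a b) :
    sectorArea N a b < ballArea N / 2 := by
  have hba : 0 < wedge b (-a) := by rwa [wedge_neg_right_eq]
  linarith [sectorArea_add_sectorArea_neg hN hab, sectorArea_pos hN hba]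

end Area

lemma AddCircle.coe_ne_zero_of_pos_of_lt {p r : ℝ} (h₀ : 0 < r) (h₁ : r < p) :
    (r : AddCircle p) ≠ 0 := by
  rw [Ne, AddCircle.coe_eq_zero_iff]
  rintro ⟨z, hz⟩
  rw [zsmul_eq_mul] at hz
  rcases le_or_gt z 0 with hz₀ | hz₀
  · have : (z : ℝ) ≤ 0 := by exact_mod_cast hz₀
    nlinarith
  · have : (1 : ℝ) ≤ z := by exact_mod_cast hz₀
    nlinarith

lemma AddCircle.coe_half_add_coe_half (p : ℝ) :
    ((p / 2 : ℝ) : AddCircle p) + ((p / 2 : ℝ) : AddCircle p) = 0 := by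
  rw [← AddCircle.coe_add, add_halves, AddCircle.coe_period]

lemma AddCircle.le_of_coe_eq_coe_int_mul {p g r : ℝ} {L j : ℤ} (hp : p = L * g) (hg : 0 < g)
    (hr : 0 < r) (h : (r : AddCircle p) = ((j * g : ℝ) : AddCircle p)) : g ≤ r := by
  obtain ⟨z, hz⟩ := (AddCircle.coe_eq_zero_iff p).1
    (by rw [AddCircle.coe_sub, h, sub_self] : ((r - j * g : ℝ) : AddCircle p) = 0)
  rw [zsmul_eq_mul, hp] at hz
  have hM : r = ((z * L + j : ℤ) : ℝ) * g := by push_cast; linarith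
  have hM₀ : 0 < z * L + j := Int.cast_pos.1 (pos_of_mul_pos_left (hM ▸ hr) hg.le)
  have hM₁ : (1 : ℝ) ≤ (z * L + j : ℤ) := by exact_mod_cast hM₀
  nlinarith

/-- The area swept counterclockwise from `u` to `x`, modulo the area of the unit ball. -/
noncomputable def areaAngle (N : ℝ × ℝ → ℝ) (u x : ℝ × ℝ) : AddCircle (ballArea N) :=
  if 0 < wedge u x then (sectorArea N u x : ℝ)
  else if 0 < wedge x u then ((ballArea N / 2 + sectorArea N (-u) x : ℝ) : AddCircle _)
  else if x = u then 0 else ((ballArea N / 2 : ℝ) : AddCircle _)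

section AreaAngle

variable {N : ℝ × ℝ → ℝ}

lemma areaAngle_of_wedge_pos {u x : ℝ × ℝ} (h : 0 < wedge u x) :
    areaAngle N u x = (sectorArea N u x : ℝ) :=
  if_pos h

lemma areaAngle_of_wedge_pos_swap {u x : ℝ × ℝ} (h : 0 < wedge x u) :
    areaAngle N u x =
      ((ballArea N / 2 : ℝ) : AddCircle (ballArea N)) + (sectorArea N (-u) x : ℝ) := by
  have : ¬ 0 < wedge u x := by linarith [wedge_anticomm u x]
  rw [areaAngle, if_neg this, if_pos h, AddCircle.coe_add]

lemma areaAngle_self (u : ℝ × ℝ) : areaAngle N u u = 0 := by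
  simp [areaAngle]

lemma areaAngle_neg_self {u : ℝ × ℝ} (hu : u ≠ 0) :
    areaAngle N u (-u) = ((ballArea N / 2 : ℝ) : AddCircle _) := by
  simp [areaAngle, neg_ne_self.mpr hu]

lemma areaAngle_neg_neg (hN : IsNorm N) (u x : ℝ × ℝ) :
    areaAngle N (-u) (-x) = areaAngle N u x := by
  have h : sectorArea N u (-x) = sectorArea N (-u) x := by
    simpa using sectorArea_neg_neg hN (-u) x
  simp only [areaAngle, wedge_neg_left, wedge_neg_right, neg_neg, neg_inj,
    sectorArea_neg_neg hN, h]

variable (hN : IsNorm N) {u : ℝ × ℝ} (hu : N u = 1)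
include hN hu

lemma areaAngle_neg_left {x : ℝ × ℝ} (hx : N x = 1) :
    areaAngle N (-u) x = areaAngle N u x + ((ballArea N / 2 : ℝ) : AddCircle (ballArea N)) := by
  have hu₀ := hN.ne_zero_of_eq_one hu
  rcases hN.eq_or_eq_neg_or_wedge_pos_or_wedge_pos hu hx with rfl | rfl | hux | hxu
  · have := areaAngle_neg_self (N := N) (neg_ne_zero.2 hu₀)
    rw [neg_neg] at this
    rw [this, areaAngle_self, zero_add]
  · rw [areaAngle_self, areaAngle_neg_self hu₀, AddCircle.coe_half_add_coe_half]
  · rw [areaAngle_of_wedge_pos_swap (by rwa [wedge_neg_right_eq]), neg_neg,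
      areaAngle_of_wedge_pos hux, add_comm]
  · rw [areaAngle_of_wedge_pos (by rwa [wedge_neg_left_eq]), areaAngle_of_wedge_pos_swap hxu,
      add_comm, ← add_assoc, AddCircle.coe_half_add_coe_half, zero_add]

lemma areaAngle_neg_right {x : ℝ × ℝ} (hx : N x = 1) :
    areaAngle N u (-x) = areaAngle N u x + ((ballArea N / 2 : ℝ) : AddCircle (ballArea N)) := by
  have := areaAngle_neg_neg hN (-u) x
  rw [neg_neg] at this
  rw [this, areaAngle_neg_left hN hu hx]

lemma areaAngle_add_of_eq_or_wedge_pos {x y : ℝ × ℝ} (hy : N y = 1)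
    (hux : x = u ∨ 0 < wedge u x) (hxy : 0 < wedge x y) :
    areaAngle N u y = areaAngle N u x + (sectorArea N x y : ℝ) := by
  rcases hux with rfl | hux
  · rw [areaAngle_self, zero_add, areaAngle_of_wedge_pos hxy]
  rcases hN.eq_or_eq_neg_or_wedge_pos_or_wedge_pos hu hy with rfl | rfl | huy | hyu
  · linarith [wedge_anticomm x y]
  · rw [areaAngle_neg_self (hN.ne_zero_of_eq_one hu), areaAngle_of_wedge_pos hux,
      ← AddCircle.coe_add, sectorArea_add_sectorArea_neg hN hux]
  · rw [areaAngle_of_wedge_pos huy, areaAngle_of_wedge_pos hux, ← AddCircle.coe_add,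
      sectorArea_add hN hux hxy huy.le]
  · rw [areaAngle_of_wedge_pos_swap hyu, areaAngle_of_wedge_pos hux,
      sectorArea_add hN (b := -u) (by rwa [wedge_neg_right_eq]) (by rwa [wedge_neg_left_eq])
        hxy.le, ← sectorArea_add_sectorArea_neg hN hux]
    simp only [AddCircle.coe_add]
    abel

lemma areaAngle_add {x y : ℝ × ℝ} (hx : N x = 1) (hy : N y = 1) (hxy : 0 < wedge x y) :
    areaAngle N u y = areaAngle N u x + (sectorArea N x y : ℝ) := by
  have hu' : N (-u) = 1 := by rw [hN.map_neg, hu]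
  -- Moving the base point to `-u` shifts every area-angle by the same half turn.
  have hbase : ∀ z, N z = 1 →
      areaAngle N u z = areaAngle N (-u) z + ((ballArea N / 2 : ℝ) : AddCircle (ballArea N)) := by
    intro z hz
    simpa using areaAngle_neg_left hN hu' hz
  rcases hN.eq_or_eq_neg_or_wedge_pos_or_wedge_pos hu hx with h | h | h | h
  · exact areaAngle_add_of_eq_or_wedge_pos hN hu hy (Or.inl h) hxy
  · rw [hbase y hy, hbase x hx, areaAngle_add_of_eq_or_wedge_pos hN hu' hy (Or.inl h) hxy]
    abel
  · exact areaAngle_add_of_eq_or_wedge_pos hN hu hy (Or.inr h) hxy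
  · rw [hbase y hy, hbase x hx, areaAngle_add_of_eq_or_wedge_pos hN hu' hy
      (Or.inr (by rwa [wedge_neg_left_eq])) hxy]
    abel

end AreaAngle

section Consecutive

variable {N : ℝ × ℝ → ℝ} (hN : IsNorm N) {u : ℝ × ℝ} (hu : N u = 1)
include hN hu

lemma wedge_pos_of_areaAngle_eq_add {x y : ℝ × ℝ} (hx : N x = 1) (hy : N y = 1) {r : ℝ}
    (hr₀ : 0 < r) (hr : r < ballArea N / 2)
    (h : areaAngle N u y = areaAngle N u x + (r : ℝ)) : 0 < wedge x y := by
  rcases hN.eq_or_eq_neg_or_wedge_pos_or_wedge_pos hx hy with rfl | rfl | hxy | hyx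
  · exact absurd (left_eq_add.1 h) (AddCircle.coe_ne_zero_of_pos_of_lt hr₀ (by linarith))
  · rw [areaAngle_neg_right hN hu hx] at h
    refine absurd ?_ (AddCircle.coe_ne_zero_of_pos_of_lt (p := ballArea N)
      (r := ballArea N / 2 - r) (by linarith) (by linarith))
    rw [AddCircle.coe_sub, add_left_cancel h, sub_self]
  · exact hxy
  · rw [areaAngle_add hN hu hy hx hyx, add_assoc, ← AddCircle.coe_add] at h
    exact absurd (left_eq_add.1 h) (AddCircle.coe_ne_zero_of_pos_of_lt
      (by linarith [sectorArea_pos hN hyx]) (by linarith [sectorArea_lt_half hN hyx]))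

theorem sectorArea_eq_of_forall_not_between {P : Set (ℝ × ℝ)} (hPS : ∀ x ∈ P, N x = 1)
    {θ₀ : AddCircle (ballArea N)} {g : ℝ} {L : ℤ} (hL : ballArea N = L * g) (hg : 0 < g)
    (hlattice : ∀ x ∈ P, ∃ j : ℤ, areaAngle N u x = θ₀ + ((j * g : ℝ) : AddCircle _))
    (hnext : ∀ x ∈ P, ∃ c ∈ P, areaAngle N u c = areaAngle N u x + (g : ℝ))
    {a b : ℝ × ℝ} (ha : a ∈ P) (hb : b ∈ P) (hab : 0 < wedge a b)
    (hcons : ∀ c ∈ P, c ≠ a → c ≠ b → ¬(0 < wedge a c ∧ 0 < wedge c b)) :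
    sectorArea N a b = g := by
  have hθb := areaAngle_add hN hu (hPS a ha) (hPS b hb) hab
  have hr₀ := sectorArea_pos hN hab
  have hr := sectorArea_lt_half hN hab
  have hgr : g ≤ sectorArea N a b := by
    obtain ⟨ja, hja⟩ := hlattice a ha
    obtain ⟨jb, hjb⟩ := hlattice b hb
    refine AddCircle.le_of_coe_eq_coe_int_mul hL hg hr₀ (j := jb - ja) ?_
    rw [hθb, hja] at hjb
    push_cast
    rw [sub_mul, AddCircle.coe_sub, eq_sub_iff_add_eq, ← add_right_inj θ₀, ← hjb]
    abel
  refine le_antisymm (not_lt.1 fun hlt => ?_) hgr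
  obtain ⟨c, hc, hθc⟩ := hnext a ha
  have hac : 0 < wedge a c :=
    wedge_pos_of_areaAngle_eq_add hN hu (hPS a ha) (hPS c hc) hg (by linarith) hθc
  have hcb : 0 < wedge c b :=
    wedge_pos_of_areaAngle_eq_add hN hu (hPS c hc) (hPS b hb) (r := sectorArea N a b - g)
      (by linarith) (by linarith) (by rw [hθb, hθc, AddCircle.coe_sub]; abel)
  exact hcons c hc (by rintro rfl; simp at hac) (by rintro rfl; simp at hcb) ⟨hac, hcb⟩

end Consecutive

lemma exists_two_mul_mul_add_eq {k m n : ℕ} (hcop : k.Coprime n) (hn : n = 2 * m + 1) :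
    ∃ i q : ℕ, 2 * k * i + n = 2 * n * q + 1 := by
  obtain ⟨z, -, hz⟩ := Nat.exists_mul_mod_eq_of_coprime (m + 1) hcop (by omega)
  have h : 1 ≡ 2 * k * z + n [MOD 2 * n] := calc
    1 ≡ 1 + 2 * n * 1 [MOD 2 * n] := (Nat.add_mul_mod_self_left 1 (2 * n) 1).symm
    _ = 2 * (m + 1) + n := by omega
    _ ≡ 2 * (k * z) + n [MOD 2 * n] := ((Nat.ModEq.mul_left' 2 hz).add_right n).symm
    _ = 2 * k * z + n := by ring
  obtain ⟨q, hq⟩ := (Nat.modEq_iff_dvd' (by omega)).1 h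
  exact ⟨z, q, by omega⟩

section Vertices

variable {N : ℝ × ℝ → ℝ} (hN : IsNorm N) {u : ℝ × ℝ} (hu : N u = 1) {v : ℕ → ℝ × ℝ}
  (hS : ∀ i, N (v i) = 1) (hccw : ∀ i, 0 < wedge (v i) (v (i + 1)))
include hN hu hS hccw

lemma areaAngle_vertex {s : ℝ} (hs : ∀ i, sectorArea N (v i) (v (i + 1)) = s) (i : ℕ) :
    areaAngle N u (v i) = areaAngle N u (v 0) + ((i * s : ℝ) : AddCircle _) := by
  induction i with
  | zero => simp
  | succ i ih =>
    rw [areaAngle_add hN hu (hS i) (hS (i + 1)) (hccw i), ih, hs, add_assoc,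
      ← AddCircle.coe_add]
    push_cast
    ring_nf

variable {g : ℝ} {k n : ℕ} (hstep : ∀ i, sectorArea N (v i) (v (i + 1)) = 2 * k * g)
  (hhalf : ballArea N / 2 = n * g)
include hstep hhalf

lemma areaAngle_vertex_mem_lattice :
    ∀ x ∈ {x | ∃ i, x = v i ∨ x = -(v i)}, ∃ j : ℤ,
      areaAngle N u x = areaAngle N u (v 0) + ((j * g : ℝ) : AddCircle _) := by
  rintro x ⟨i, rfl | rfl⟩
  · refine ⟨2 * k * i, ?_⟩
    rw [areaAngle_vertex hN hu hS hccw hstep]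
    push_cast
    ring_nf
  · refine ⟨2 * k * i + n, ?_⟩
    rw [areaAngle_neg_right hN hu (hS i), areaAngle_vertex hN hu hS hccw hstep,
      hhalf, add_assoc, ← AddCircle.coe_add]
    push_cast
    ring_nf

lemma exists_vertex_areaAngle_eq_add {i₁ q : ℕ} (hi₁ : 2 * k * i₁ + n = 2 * n * q + 1) :
    ∀ x ∈ {x | ∃ i, x = v i ∨ x = -(v i)}, ∃ c ∈ {x | ∃ i, x = v i ∨ x = -(v i)},
      areaAngle N u c = areaAngle N u x + (g : ℝ) := by
  have hperiod : ((q * ballArea N : ℝ) : AddCircle (ballArea N)) = 0 :=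
    (AddCircle.coe_eq_zero_iff _).2 ⟨q, by simp⟩
  have hi₁' : (2 * k * i₁ + n : ℝ) = 2 * n * q + 1 := by exact_mod_cast hi₁
  have hshift : ∀ i, areaAngle N u (-(v (i + i₁))) = areaAngle N u (v i) + (g : ℝ) := by
    intro i
    rw [areaAngle_neg_right hN hu (hS _), areaAngle_vertex hN hu hS hccw hstep (i + i₁),
      areaAngle_vertex hN hu hS hccw hstep i, hhalf,
      add_assoc, add_assoc, ← AddCircle.coe_add, ← AddCircle.coe_add,
      show ((i + i₁ : ℕ) * (2 * k * g) + n * g : ℝ) = i * (2 * k * g) + g + q * ballArea N by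
        push_cast; linear_combination g * hi₁' - 2 * q * hhalf,
      AddCircle.coe_add, hperiod, add_zero]
  rintro x ⟨i, rfl | rfl⟩
  · exact ⟨-(v (i + i₁)), ⟨i + i₁, Or.inr rfl⟩, hshift i⟩
  · refine ⟨v (i + i₁), ⟨i + i₁, Or.inl rfl⟩, ?_⟩
    have h := areaAngle_neg_right hN hu (x := -(v (i + i₁))) (by rw [hN.map_neg, hS])
    rw [neg_neg] at h
    rw [h, hshift, areaAngle_neg_right hN hu (hS i)]
    abel

end Vertices

lemma volume_sector_eq_of_sectorArea_eq {N : ℝ × ℝ → ℝ} (hN : IsNorm N) {a b : ℝ × ℝ} {d : ℕ}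
    (hd : 0 < d) (h : sectorArea N a b = ballArea N / d) :
    volume (Sector N a b) = volume {x : ℝ × ℝ | N x ≤ 1} / d := by
  rw [← ENNReal.ofReal_toReal (volume_sector_ne_top hN a b),
    ← ENNReal.ofReal_toReal hN.volume_unitBall_ne_top]
  change ENNReal.ofReal (sectorArea N a b) = ENNReal.ofReal (ballArea N) / d
  rw [h, ENNReal.ofReal_div_of_pos (by exact_mod_cast hd), ENNReal.ofReal_natCast]

theorem stmt_18_general (N : ℝ × ℝ → ℝ) (hN : IsNorm N) (m n k : ℕ)
    (hn : n = 2 * m + 1) (hcop : Nat.Coprime k n)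
    (v : ℕ → ℝ × ℝ) (hS : ∀ i, N (v i) = 1)
    (hccw : ∀ i, 0 < wedge (v i) (v (i + 1)))
    (harea : ∀ i, MeasureTheory.volume (Sector N (v i) (v (i + 1)))
      = (k : ENNReal) / (n : ENNReal) * MeasureTheory.volume {x : ℝ × ℝ | N x ≤ 1}) :
    ∀ a b : ℝ × ℝ,
      (∃ i, a = v i ∨ a = -(v i)) → (∃ j, b = v j ∨ b = -(v j)) →
      0 < wedge a b →
      (∀ c : ℝ × ℝ, (∃ l, c = v l ∨ c = -(v l)) → c ≠ a → c ≠ b →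
        ¬(0 < wedge a c ∧ 0 < wedge c b)) →
      MeasureTheory.volume (Sector N a b)
        = MeasureTheory.volume {x : ℝ × ℝ | N x ≤ 1} / (2 * (n : ENNReal)) := by
  intro a b ha hb hab hcons
  have hn₀ : (0 : ℝ) < n := by exact_mod_cast (by omega : 0 < n)
  set g := ballArea N / (2 * n) with hg_def
  have hp : 0 < ballArea N := by
    linarith [sectorArea_pos hN (hccw 0), sectorArea_lt_half hN (hccw 0)]
  have hg : 0 < g := by positivity
  have hstep : ∀ i, sectorArea N (v i) (v (i + 1)) = 2 * k * g := fun i => by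
    have h := congrArg ENNReal.toReal (harea i)
    rw [ENNReal.toReal_mul, ENNReal.toReal_div, ENNReal.toReal_natCast,
      ENNReal.toReal_natCast] at h
    rw [sectorArea, h, hg_def, ballArea]
    field_simp
  have hhalf : ballArea N / 2 = n * g := by rw [hg_def]; field_simp
  obtain ⟨i₁, q, hi₁⟩ := exists_two_mul_mul_add_eq hcop hn
  have hPS : ∀ x ∈ {x | ∃ i, x = v i ∨ x = -(v i)}, N x = 1 := by
    rintro x ⟨i, rfl | rfl⟩ <;> simp [hN.map_neg, hS]
  have hab_eq := sectorArea_eq_of_forall_not_between hN (hS 0) hPS (L := 2 * n)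
    (by push_cast; linarith) hg (areaAngle_vertex_mem_lattice hN (hS 0) hS hccw hstep hhalf)
    (exists_vertex_areaAngle_eq_add hN (hS 0) hS hccw hstep hhalf hi₁) ha hb hab hcons
  rw [volume_sector_eq_of_sectorArea_eq hN (d := 2 * n) (by omega) (by rw [hab_eq]; push_cast; rfl)]
  push_cast
  rfl

/-- Let `n = 2m+1` be odd and `v₁,…,v_n` distinct points of the unit
sphere, arranged counterclockwise (cyclically, `v_{n+1} = v₁`), no `vᵢ` equal to
`−vⱼ`, such that each sector `B_{vᵢ}^{vᵢ₊₁}` has area `k·Area(B)/n` (winding number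
`k` coprime to `n`). Then the `2n` points `{±v₁,…,±v_n}` split the unit ball into
`2n` sectors of equal area `Area(B)/(2n)`: any two cyclically consecutive points of
`{±vᵢ}` bound a sector of that area. -/
theorem stmt_18 (N : ℝ × ℝ → ℝ) (hN : IsNorm N) (m n k : ℕ) (hm : 1 ≤ m)
    (hn : n = 2 * m + 1) (hk : 0 < k) (h2k : 2 * k < n) (hcop : Nat.Coprime k n)
    (v : ℕ → ℝ × ℝ) (hperiodic : ∀ i, v (i + n) = v i) (hS : ∀ i, N (v i) = 1)
    (hdist : ∀ i < n, ∀ j < n, v i = v j → i = j)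
    (hccw : ∀ i, 0 < wedge (v i) (v (i + 1)))
    (hanti : ∀ i j, v i ≠ -(v j))
    (harea : ∀ i, MeasureTheory.volume (Sector N (v i) (v (i + 1)))
      = (k : ENNReal) / (n : ENNReal) * MeasureTheory.volume {x : ℝ × ℝ | N x ≤ 1}) :
    ∀ a b : ℝ × ℝ,
      (∃ i, a = v i ∨ a = -(v i)) → (∃ j, b = v j ∨ b = -(v j)) →
      0 < wedge a b →
      (∀ c : ℝ × ℝ, (∃ l, c = v l ∨ c = -(v l)) → c ≠ a → c ≠ b →
        ¬(0 < wedge a c ∧ 0 < wedge c b)) →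
      MeasureTheory.volume (Sector N a b)
        = MeasureTheory.volume {x : ℝ × ℝ | N x ≤ 1} / (2 * (n : ENNReal)) :=
  stmt_18_general N hN m n k hn hcop v hS hccw harea
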